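/- Two time-scales dynamic programming with slow-scale independence (finite case): let d range over days 0,...,D and m over minutes 0,...,M. Suppose the slow-scale noise blocks W_{(d,1):(d+1,0)} = (W_{d,1},...,W_{d,M}, W_{d+1,0}) are mutually independent across d (no independence required within a block). Let X_0,...,X_{D+1} be finite state spaces with slow-scale dynamics f_d : X_d × H_{d:d+1} → X_{d+1}, where H_{d:d+1} collects all controls and noises within day d. Define Ṽ_{D+1} = j̃ and Ṽ_d(x) = inf over within-day adapted control processes (U_{d,0},...,U_{d,M}) (σ(U_{d,m}) ⊆ σ(W_{d,1},...,W_{d,m})) of E[ Ṽ_{d+1}( f_d(x, U_{d,0}, W_{d,1}, ..., U_{d,M}, W_{d+1,0}) ) ]. Then Ṽ_d(x_d) equals the infimum over all adapted control processes from day d to day D of E[ j̃(X_{D+1}) ], where X_d = x_d and X_{d'+1} = f_{d'}(X_{d'}, U_{d',0}, W_{d',1}, ..., U_{d',M}, W_{d'+1,0}). -/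

import Mathlib

open scoped ENNReal
open Classical

/-- Transport of a state along an equality of day indices. -/
def xcast {X : ℕ → Type} {a b : ℕ} (e : a = b) (x : X a) : X b := e ▸ x

/-- The slow-scale value functions: `Ṽ_{d+n} = K` and `Ṽ_d(x)` is the infimum over
within-day adapted control processes `(U_{d,0},…,U_{d,M})`
(`σ(U_{d,m}) ⊆ σ(W_{d,1},…,W_{d,m})`, so that `U_{d,0}` is deterministic) of
`E[ Ṽ_{d+1}( f_d(x, U_{d,0}, W_{d,1}, …, U_{d,M}, W_{d+1,0}) ) ]`. -/
noncomputable def Vday {X : ℕ → Type} {Uc Wn : ℕ → ℕ → Type} {Ω : Type} (M : ℕ)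
    (P : Ω → ℝ≥0∞) (Wp : ∀ d m, Ω → Wn d m)
    (f : ∀ d, X d → (∀ m : Fin (M + 1), Uc d m) →
      (∀ m : Fin M, Wn d ((m : ℕ) + 1)) → Wn (d + 1) 0 → X (d + 1)) :
    ∀ (n d : ℕ), (X (d + n) → ℝ≥0∞) → X d → ℝ≥0∞
  | 0, _, K, x => K x
  | n + 1, d, K, x =>
      ⨅ Ud : {Ud : ∀ m : Fin (M + 1), Ω → Uc d m //
          ∀ (m : Fin (M + 1)) (ω ω' : Ω),
            (∀ m', 1 ≤ m' → m' ≤ (m : ℕ) → Wp d m' ω = Wp d m' ω') → Ud m ω = Ud m ω'},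
        ∑' ω : Ω,
          Vday M P Wp f n (d + 1) (fun x' => K (xcast (by omega) x'))
            (f d x (fun m => Ud.1 m ω) (fun m => Wp d ((m : ℕ) + 1) ω)
              (Wp (d + 1) 0 ω)) * P ω

/-- The random slow-scale state trajectory `X_d = x`,
`X_{d'+1} = f_{d'}(X_{d'}, U_{d',0}, W_{d',1}, …, U_{d',M}, W_{d'+1,0})` driven by a control
process `Up` and the noises. -/
def trajDay {X : ℕ → Type} {Uc Wn : ℕ → ℕ → Type} {Ω : Type} (M : ℕ)
    (Wp : ∀ d m, Ω → Wn d m)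
    (f : ∀ d, X d → (∀ m : Fin (M + 1), Uc d m) →
      (∀ m : Fin M, Wn d ((m : ℕ) + 1)) → Wn (d + 1) 0 → X (d + 1))
    (Up : ∀ d m, Ω → Uc d m) :
    ∀ (n d : ℕ), X d → Ω → X (d + n)
  | 0, _, x, _ => x
  | n + 1, d, x, ω =>
      f (d + n) (trajDay M Wp f Up n d x ω) (fun m => Up (d + n) m ω)
        (fun m => Wp (d + n) ((m : ℕ) + 1) ω) (Wp (d + n + 1) 0 ω)

/-!
By induction on the number of remaining days, it suffices to show that the optimal cost over
controls adapted to the horizon from day `d` satisfies the slow-scale Bellman equation. A control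
adapted to the whole horizon consists of a within-day control for day `d` and, for every value of
the day-`d` noise block, a control adapted to the horizon from day `d + 1`; conversely, a
within-day control followed by continuations depending on the end-of-day state (chosen
`ε`-optimal state by state) is adapted to the whole horizon. The day-`d` block is independent of
the later blocks, so by the freezing lemma the expected cost of such a control is the average,
over the day-`d` block, of the expected continuation costs from the end-of-day state.
-/

theorem xcast_eq_of_heq {X : ℕ → Type} {a b : ℕ} (h : a = b) {x : X a} {y : X b}
    (hxy : HEq x y) : xcast h x = y := by
  subst h
  exact eq_of_heq hxy

theorem ENNReal.exists_le_iInf_add {ι : Sort*} [Nonempty ι] (g : ι → ℝ≥0∞) {ε : ℝ≥0∞}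
    (hε : ε ≠ 0) : ∃ i, g i ≤ (⨅ i, g i) + ε := by
  by_cases h : ⨅ i, g i = ⊤
  · exact ⟨Classical.arbitrary ι, by simp [h]⟩
  · obtain ⟨i, hi⟩ := iInf_lt_iff.1 (ENNReal.lt_add_right h hε)
    exact ⟨i, hi.le⟩

namespace FiniteProb

variable {Ω : Type*} [Fintype Ω] (P : Ω → ℝ≥0∞)

-- The decidability instances are implicit so that they are unified with those of the goal:
-- under `open Classical` they need not be the synthesized ones.
theorem sum_filter_congr_of_iff {p q : Ω → Prop} {_ : DecidablePred p} {_ : DecidablePred q}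
    (h : ∀ ω, p ω ↔ q ω) : ∑ ω with p ω, P ω = ∑ ω with q ω, P ω := by
  congr 1
  ext ω
  simp [h]

theorem sum_comp_mul_eq_sum_mul_sum_filter {α : Type*} [DecidableEq α] {V : Ω → α}
    {t : Finset α} (ht : ∀ ω, V ω ∈ t) (H : α → ℝ≥0∞) :
    ∑ ω, H (V ω) * P ω = ∑ v ∈ t, H v * ∑ ω with V ω = v, P ω := by
  rw [← Finset.sum_fiberwise_of_maps_to (fun ω _ => ht ω)]
  refine Finset.sum_congr rfl fun v _ => ?_
  rw [Finset.mul_sum]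
  exact Finset.sum_congr rfl fun ω hω => by rw [(Finset.mem_filter.1 hω).2]

theorem sum_sum_filter_eq_one {α : Type*} [DecidableEq α] (V : Ω → α) {t : Finset α}
    (ht : ∀ ω, V ω ∈ t) (hP : ∑ ω, P ω = 1) : ∑ v ∈ t, ∑ ω with V ω = v, P ω = 1 := by
  simpa [hP] using (sum_comp_mul_eq_sum_mul_sum_filter P ht (fun _ => 1)).symm

/-- Independence of `Y` and `Z`, tested only on the values they take. -/
def IndepOnAtoms {β γ : Type*} (Y : Ω → β) (Z : Ω → γ) : Prop :=
  ∀ ω₁ ω₂, ∑ ω with Y ω = Y ω₁ ∧ Z ω = Z ω₂, P ω =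
    (∑ ω with Y ω = Y ω₁, P ω) * ∑ ω with Z ω = Z ω₂, P ω

theorem sum_comp_pair_eq_of_indepOnAtoms {β γ : Type*} {Y : Ω → β} {Z : Ω → γ}
    (hYZ : IndepOnAtoms P Y Z) (g : β → γ → ℝ≥0∞) :
    ∑ ω, g (Y ω) (Z ω) * P ω = ∑ ω, (∑ ω', g (Y ω) (Z ω') * P ω') * P ω := by
  set tY := Finset.univ.image Y
  set tZ := Finset.univ.image Z
  have hY : ∀ ω, Y ω ∈ tY := fun ω => Finset.mem_image_of_mem Y (Finset.mem_univ ω)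
  have hZ : ∀ ω, Z ω ∈ tZ := fun ω => Finset.mem_image_of_mem Z (Finset.mem_univ ω)
  calc ∑ ω, g (Y ω) (Z ω) * P ω
      = ∑ p ∈ tY ×ˢ tZ, g p.1 p.2 * ∑ ω with (Y ω, Z ω) = p, P ω := by
        exact sum_comp_mul_eq_sum_mul_sum_filter P (V := fun ω => (Y ω, Z ω))
          (fun ω => Finset.mem_product.2 ⟨hY ω, hZ ω⟩) (fun p => g p.1 p.2)
    _ = ∑ b ∈ tY, (∑ c ∈ tZ, g b c * ∑ ω with Z ω = c, P ω) * ∑ ω with Y ω = b, P ω := by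
        rw [Finset.sum_product]
        refine Finset.sum_congr rfl fun b hb => ?_
        rw [Finset.sum_mul]
        refine Finset.sum_congr rfl fun c hc => ?_
        obtain ⟨ω₁, -, rfl⟩ := Finset.mem_image.1 hb
        obtain ⟨ω₂, -, rfl⟩ := Finset.mem_image.1 hc
        simp only [Prod.mk.injEq, hYZ ω₁ ω₂]
        ring
    _ = ∑ ω, (∑ ω', g (Y ω) (Z ω') * P ω') * P ω := by
        rw [sum_comp_mul_eq_sum_mul_sum_filter P hY (fun b => ∑ ω', g b (Z ω') * P ω')]
        refine Finset.sum_congr rfl fun b _ => ?_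
        rw [sum_comp_mul_eq_sum_mul_sum_filter P hZ]

/-- The freezing lemma `E[G(Y, Z)] = E[E[G(y, Z)]|_{y = Y}]` for independent `Y` and `Z`. -/
theorem sum_diag_eq_sum_sum_of_indepOnAtoms {β γ : Type*} {Y : Ω → β} {Z : Ω → γ}
    (hYZ : IndepOnAtoms P Y Z) (G : Ω → Ω → ℝ≥0∞)
    (hGY : ∀ ω₁ ω₂, Y ω₁ = Y ω₂ → G ω₁ = G ω₂)
    (hGZ : ∀ ω ω₁ ω₂, Z ω₁ = Z ω₂ → G ω ω₁ = G ω ω₂) :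
    ∑ ω, G ω ω * P ω = ∑ ω, (∑ ω', G ω ω' * P ω') * P ω := by
  cases isEmpty_or_nonempty Ω
  · simp only [Finset.univ_eq_empty, Finset.sum_empty]
  obtain ⟨g, hg⟩ : ∃ g : β → γ → ℝ≥0∞, ∀ ω ω', G ω ω' = g (Y ω) (Z ω') :=
    ⟨fun b c => G (Function.invFun Y b) (Function.invFun Z c), fun ω ω' => by
      rw [hGY _ _ (Function.invFun_eq ⟨ω, rfl⟩).symm,
        hGZ _ _ _ (Function.invFun_eq ⟨ω', rfl⟩).symm]⟩
  simp only [hg]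
  exact sum_comp_pair_eq_of_indepOnAtoms P hYZ g

def JointLawFactorizes {ι : Type*} {β : ι → Type*} (B : ∀ i, Ω → β i) (S : Finset ι) : Prop :=
  ∀ γ : ∀ i, β i, ∑ ω with ∀ i ∈ S, B i ω = γ i, P ω = ∏ i ∈ S, ∑ ω with B i ω = γ i, P ω

namespace JointLawFactorizes

variable {P} {ι : Type*} {β : ι → Type*} {B : ∀ i, Ω → β i}

theorem erase {S : Finset ι} (hP : ∑ ω, P ω = 1) (h : JointLawFactorizes P B S) (j : ι) :
    JointLawFactorizes P B (S.erase j) := by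
  by_cases hj : j ∈ S
  swap
  · rwa [Finset.erase_eq_of_notMem hj]
  intro γ
  have hmem : ∀ ω, B j ω ∈ Finset.univ.image (B j) :=
    fun ω => Finset.mem_image_of_mem _ (Finset.mem_univ ω)
  calc ∑ ω with ∀ i ∈ S.erase j, B i ω = γ i, P ω
      = ∑ c ∈ Finset.univ.image (B j),
          ∑ ω with ∀ i ∈ S, B i ω = Function.update γ j c i, P ω := by
        rw [← Finset.sum_fiberwise_of_maps_to (g := B j) (fun ω _ => hmem ω)]
        refine Finset.sum_congr rfl fun c _ => ?_
        rw [Finset.filter_filter]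
        refine Finset.sum_congr (Finset.filter_congr fun ω _ => ?_) fun _ _ => rfl
        constructor
        · rintro ⟨hS, rfl⟩ i hi
          by_cases hij : i = j
          · subst hij
            exact (Function.update_self ..).symm
          · rw [Function.update_of_ne hij]
            exact hS i (Finset.mem_erase.2 ⟨hij, hi⟩)
        · intro hS
          refine ⟨fun i hi => ?_, by simpa using hS j hj⟩
          simpa [Function.update_of_ne (Finset.ne_of_mem_erase hi)] using
            hS i (Finset.mem_of_mem_erase hi)
    _ = ∑ c ∈ Finset.univ.image (B j), (∑ ω with B j ω = c, P ω) *
          ∏ i ∈ S.erase j, ∑ ω with B i ω = γ i, P ω := by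
        refine Finset.sum_congr rfl fun c _ => ?_
        rw [h, ← Finset.mul_prod_erase S _ hj, Function.update_self]
        congr 1
        exact Finset.prod_congr rfl fun i hi => by
          rw [Function.update_of_ne (Finset.ne_of_mem_erase hi)]
    _ = ∏ i ∈ S.erase j, ∑ ω with B i ω = γ i, P ω := by
        rw [← Finset.sum_mul, sum_sum_filter_eq_one P (B j) hmem hP, one_mul]

theorem mono {S T : Finset ι} (hP : ∑ ω, P ω = 1) (h : JointLawFactorizes P B S) (hT : T ⊆ S) :
    JointLawFactorizes P B T := by
  have hsdiff : ∀ R : Finset ι, JointLawFactorizes P B (S \ R) := by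
    intro R
    induction R using Finset.induction_on with
    | empty => simpa using h
    | insert j R _ ih =>
      rw [Finset.sdiff_insert]
      exact ih.erase hP j
  simpa [Finset.sdiff_sdiff_eq_self hT] using hsdiff (S \ T)

theorem indepOnAtoms {T : Finset ι} {j : ι} (hjT : JointLawFactorizes P B (insert j T))
    (hT : JointLawFactorizes P B T) (hj : j ∉ T) :
    IndepOnAtoms P (B j) (fun ω (i : T) => B i ω) := by
  intro ω₁ ω₂
  have hZ : ∀ ω, ((fun i : T => B i ω) = fun i : T => B i ω₂) ↔ ∀ i ∈ T, B i ω = B i ω₂ := by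
    simp [funext_iff]
  set γ := Function.update (fun i => B i ω₂) j (B j ω₁)
  have hγj : γ j = B j ω₁ := Function.update_self ..
  have hγ : ∀ i ∈ T, γ i = B i ω₂ :=
    fun i hi => Function.update_of_ne (by rintro rfl; exact hj hi) _ _
  calc _ = ∑ ω with ∀ i ∈ insert j T, B i ω = γ i, P ω := by
        refine sum_filter_congr_of_iff P fun ω => ?_
        rw [hZ, Finset.forall_mem_insert, hγj]
        exact and_congr_right fun _ => forall₂_congr fun i hi => by rw [hγ i hi]
    _ = (∑ ω with B j ω = γ j, P ω) * ∏ i ∈ T, ∑ ω with B i ω = γ i, P ω := by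
        rw [hjT, Finset.prod_insert hj]
    _ = _ := by
        rw [← hT γ, hγj]
        congr 1
        refine sum_filter_congr_of_iff P fun ω => ?_
        rw [hZ]
        exact forall₂_congr fun i hi => by rw [hγ i hi]

end JointLawFactorizes

end FiniteProb

namespace TwoTimeScale

open FiniteProb

variable {X : ℕ → Type} {Uc Wn : ℕ → ℕ → Type} {Ω : Type} (M : ℕ)

variable (Wn) in
abbrev NoiseBlock (d : ℕ) : Type := (∀ m : Fin M, Wn d ((m : ℕ) + 1)) × Wn (d + 1) 0

def dayBlock (w : ∀ d m, Wn d m) (d : ℕ) : NoiseBlock Wn M d :=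
  (fun m => w d ((m : ℕ) + 1), w (d + 1) 0)

theorem dayBlock_eq_iff {u v : ∀ d m, Wn d m} {d : ℕ} :
    dayBlock M u d = dayBlock M v d ↔
      (∀ m, 1 ≤ m → m ≤ M → u d m = v d m) ∧ u (d + 1) 0 = v (d + 1) 0 := by
  simp only [dayBlock, Prod.mk.injEq, funext_iff, Fin.forall_iff]
  refine and_congr_left fun _ => ⟨fun h m h1 h2 => ?_, fun h m hm => h (m + 1) (by omega) hm⟩
  obtain ⟨m, rfl⟩ := Nat.exists_eq_add_of_le' h1
  exact h m h2

section NoiseOfBlocks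

variable [∀ d m, Nonempty (Wn d m)]

noncomputable def noiseOfBlocks (γ : ∀ d, NoiseBlock Wn M d) : ∀ d m, Wn d m
  | d, m + 1 => if h : m < M then (γ d).1 ⟨m, h⟩ else Classical.arbitrary _
  | 0, 0 => Classical.arbitrary _
  | d + 1, 0 => (γ d).2

theorem dayBlock_noiseOfBlocks (γ : ∀ d, NoiseBlock Wn M d) (d : ℕ) :
    dayBlock M (noiseOfBlocks M γ) d = γ d := by
  ext m
  · simp [dayBlock, noiseOfBlocks]
  · rfl

end NoiseOfBlocks

variable (Wp : ∀ d m, Ω → Wn d m)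

def dayNoise (d : ℕ) (ω : Ω) : NoiseBlock Wn M d :=
  dayBlock M (fun d m => Wp d m ω) d

def laterNoise (D d : ℕ) (ω : Ω) (k : Finset.Ioc d D) : NoiseBlock Wn M k :=
  dayNoise M Wp k ω

/-- `ω` and `ω'` carry the same noises `W_{d'',m''}` of the horizon that starts right after
`(d, 0)`, up to `(d', m')` in the lexicographic order. -/
def NoiseAgree (d d' m' : ℕ) (ω ω' : Ω) : Prop :=
  ∀ d'' m'', ((d < d'' ∧ m'' = 0) ∨ (d ≤ d'' ∧ 1 ≤ m'' ∧ m'' ≤ M)) →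
    (d'' < d' ∨ (d'' = d' ∧ m'' ≤ m')) → Wp d'' m'' ω = Wp d'' m'' ω'

def HorizonAdapted (d : ℕ) (U : ∀ d' m', Ω → Uc d' m') : Prop :=
  ∀ d' m' ω ω', NoiseAgree M Wp d d' m' ω ω' → U d' m' ω = U d' m' ω'

def DayAdapted (d : ℕ) (Ud : ∀ m : Fin (M + 1), Ω → Uc d m) : Prop :=
  ∀ (m : Fin (M + 1)) ω ω', (∀ m', 1 ≤ m' → m' ≤ (m : ℕ) → Wp d m' ω = Wp d m' ω') →
    Ud m ω = Ud m ω'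

variable (f : ∀ d, X d → (∀ m : Fin (M + 1), Uc d m) →
      (∀ m : Fin M, Wn d ((m : ℕ) + 1)) → Wn (d + 1) 0 → X (d + 1))

def endOfDay {d : ℕ} (x : X d) (Ud : ∀ m : Fin (M + 1), Ω → Uc d m) (ω : Ω) : X (d + 1) :=
  f d x (fun m => Ud m ω) (dayNoise M Wp d ω).1 (dayNoise M Wp d ω).2

variable {M Wp f}

namespace NoiseAgree

variable {d d' m' : ℕ} {ω ω' ω'' : Ω}

theorem refl (ω : Ω) : NoiseAgree M Wp d d' m' ω ω := fun _ _ _ _ => rfl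

theorem symm (h : NoiseAgree M Wp d d' m' ω ω') : NoiseAgree M Wp d d' m' ω' ω :=
  fun d'' m'' hH hL => (h d'' m'' hH hL).symm

theorem trans (h : NoiseAgree M Wp d d' m' ω ω') (h' : NoiseAgree M Wp d d' m' ω' ω'') :
    NoiseAgree M Wp d d' m' ω ω'' :=
  fun d'' m'' hH hL => (h d'' m'' hH hL).trans (h' d'' m'' hH hL)

theorem succ (h : NoiseAgree M Wp d d' m' ω ω') : NoiseAgree M Wp (d + 1) d' m' ω ω' :=
  fun d'' m'' hH hL => h d'' m'' (by omega) hL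

theorem dayNoise_eq (h : NoiseAgree M Wp d d' m' ω ω') (hd : d < d') :
    dayNoise M Wp d ω = dayNoise M Wp d ω' :=
  (dayBlock_eq_iff M).2 ⟨fun m h1 h2 => h d m (Or.inr ⟨le_rfl, h1, h2⟩) (Or.inl hd),
    h (d + 1) 0 (Or.inl ⟨by omega, rfl⟩) (by omega)⟩

theorem of_dayNoise_eq (hd : dayNoise M Wp d ω = dayNoise M Wp d ω')
    (h : NoiseAgree M Wp (d + 1) d' m' ω ω') : NoiseAgree M Wp d d' m' ω ω' := by
  obtain ⟨hday, hnext⟩ := (dayBlock_eq_iff M).1 hd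
  intro d'' m'' hH hL
  by_cases hd'' : d'' = d ∧ 1 ≤ m''
  · obtain ⟨rfl, h1⟩ := hd''
    exact hday m'' h1 (by omega)
  by_cases hd1 : d'' = d + 1 ∧ m'' = 0
  · obtain ⟨rfl, rfl⟩ := hd1
    exact hnext
  exact h d'' m'' (by omega) hL

end NoiseAgree

theorem noiseAgree_of_dayNoise_eq {d d' m' : ℕ} {ω ω' : Ω}
    (h : ∀ k, d ≤ k → k ≤ d' → dayNoise M Wp k ω = dayNoise M Wp k ω') :
    NoiseAgree M Wp d d' m' ω ω' := by
  intro d'' m'' hH hL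
  rcases hH with ⟨hd, rfl⟩ | ⟨hd, h1, h2⟩
  · obtain ⟨k, rfl⟩ := Nat.exists_eq_add_of_lt hd
    exact ((dayBlock_eq_iff M).1 (h (d + k) (by omega) (by omega))).2
  · exact ((dayBlock_eq_iff M).1 (h d'' hd (by omega))).1 m'' h1 h2

theorem HorizonAdapted.dayAdapted {d : ℕ} {U : ∀ d' m', Ω → Uc d' m'}
    (hU : HorizonAdapted M Wp d U) : DayAdapted M Wp d (fun m => U d m) :=
  fun m ω ω' h => hU d m ω ω' fun d'' m'' hH hL => by
    obtain ⟨rfl, h1, h2⟩ : d'' = d ∧ 1 ≤ m'' ∧ m'' ≤ m := by omega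
    exact h m'' h1 h2

theorem DayAdapted.eq_of_dayNoise_eq {d : ℕ} {Ud : ∀ m : Fin (M + 1), Ω → Uc d m}
    (hUd : DayAdapted M Wp d Ud) {ω ω' : Ω} (h : dayNoise M Wp d ω = dayNoise M Wp d ω')
    (m : Fin (M + 1)) : Ud m ω = Ud m ω' :=
  hUd m ω ω' fun m' h1 h2 => ((dayBlock_eq_iff M).1 h).1 m' h1 (by omega)

theorem DayAdapted.endOfDay_eq {d : ℕ} {Ud : ∀ m : Fin (M + 1), Ω → Uc d m}
    (hUd : DayAdapted M Wp d Ud) (x : X d) {ω ω' : Ω}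
    (h : dayNoise M Wp d ω = dayNoise M Wp d ω') :
    endOfDay M Wp f x Ud ω = endOfDay M Wp f x Ud ω' := by
  simp only [endOfDay, h, funext (hUd.eq_of_dayNoise_eq h)]

theorem trajDay_congr (U U' : ∀ d m, Ω → Uc d m) (n d : ℕ) (x : X d) (ω ω' : Ω)
    (hU : ∀ k m, d ≤ k → k < d + n → U k m ω = U' k m ω')
    (hW : ∀ k, d ≤ k → k < d + n → dayNoise M Wp k ω = dayNoise M Wp k ω') :
    trajDay M Wp f U n d x ω = trajDay M Wp f U' n d x ω' := by
  induction n with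
  | zero => rfl
  | succ n ih =>
    change endOfDay M Wp f (trajDay M Wp f U n d x ω) (fun m => U (d + n) m) ω =
      endOfDay M Wp f (trajDay M Wp f U' n d x ω') (fun m => U' (d + n) m) ω'
    rw [ih (fun k m h1 _ => hU k m h1 (by omega)) (fun k h1 _ => hW k h1 (by omega)),
      endOfDay, endOfDay, hW (d + n) (by omega) (by omega)]
    simp only [hU (d + n) _ (by omega) (by omega)]

theorem HorizonAdapted.trajDay_eq {d : ℕ} {U : ∀ d m, Ω → Uc d m}
    (hU : HorizonAdapted M Wp d U) (n : ℕ) (x : X d) {ω ω' : Ω}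
    (h : ∀ k, d ≤ k → k < d + n → dayNoise M Wp k ω = dayNoise M Wp k ω') :
    trajDay M Wp f U n d x ω = trajDay M Wp f U n d x ω' :=
  trajDay_congr U U n d x ω ω'
    (fun k m _ hk => hU k m ω ω' (noiseAgree_of_dayNoise_eq fun k' h₁ h₂ => h k' h₁ (by omega)))
    h

theorem trajDay_succ_heq (U : ∀ d m, Ω → Uc d m) (n d : ℕ) (x : X d) (ω : Ω) :
    HEq (trajDay M Wp f U (n + 1) d x ω)
      (trajDay M Wp f U n (d + 1) (endOfDay M Wp f x (fun m => U d m) ω) ω) := by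
  induction n with
  | zero => rfl
  | succ n ih =>
    have step : ∀ a b, a = b → ∀ (y : X a) (y' : X b), HEq y y' →
        HEq (endOfDay M Wp f y (fun m => U a m) ω) (endOfDay M Wp f y' (fun m => U b m) ω) := by
      rintro a b rfl y y' hy
      cases hy
      rfl
    exact step _ _ (by omega) _ _ ih

section Splice

variable [∀ d m, Nonempty (Uc d m)]

variable (M Wp) in
theorem nonempty_horizonAdapted (d : ℕ) :
    Nonempty {U : ∀ d' m', Ω → Uc d' m' // HorizonAdapted M Wp d U} :=
  ⟨⟨fun _ _ _ => Classical.arbitrary _, fun _ _ _ _ _ => rfl⟩⟩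

noncomputable def spliceControl (d : ℕ) (Ud : ∀ m : Fin (M + 1), Ω → Uc d m)
    (V : Ω → ∀ d' m', Ω → Uc d' m') : ∀ d' m', Ω → Uc d' m' := fun d' m' ω =>
  if d < d' then V ω d' m' ω
  else if h : d' = d ∧ m' < M + 1 then cast (congrArg (Uc · m') h.1.symm) (Ud ⟨m', h.2⟩ ω)
  else Classical.arbitrary _

variable {d : ℕ} {Ud : ∀ m : Fin (M + 1), Ω → Uc d m} {V : Ω → ∀ d' m', Ω → Uc d' m'}

theorem spliceControl_of_lt {d' : ℕ} (hd : d < d') (m' : ℕ) (ω : Ω) :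
    spliceControl d Ud V d' m' ω = V ω d' m' ω :=
  if_pos hd

theorem spliceControl_self {m : ℕ} (hm : m < M + 1) (ω : Ω) :
    spliceControl d Ud V d m ω = Ud ⟨m, hm⟩ ω := by
  simp [spliceControl, hm]

theorem horizonAdapted_spliceControl (hUd : DayAdapted M Wp d Ud)
    (hV : ∀ ω, HorizonAdapted M Wp (d + 1) (V ω))
    (hVd : ∀ ω ω', dayNoise M Wp d ω = dayNoise M Wp d ω' → V ω = V ω') :
    HorizonAdapted M Wp d (spliceControl d Ud V) := by
  intro d' m' ω ω' h
  rcases lt_trichotomy d d' with hd | rfl | hd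
  · rw [spliceControl_of_lt hd, spliceControl_of_lt hd, hVd ω ω' (h.dayNoise_eq hd)]
    exact hV ω' d' m' ω ω' h.succ
  · by_cases hm : m' < M + 1
    · rw [spliceControl_self hm, spliceControl_self hm]
      exact hUd ⟨m', hm⟩ ω ω' fun m'' h1 h2 =>
        h d m'' (Or.inr ⟨le_rfl, h1, by omega⟩) (Or.inr ⟨rfl, h2⟩)
    · simp [spliceControl, hm]
  · simp [spliceControl, hd.not_gt, hd.ne]

end Splice

variable (M Wp) in
/-- On the sample points whose day-`d` block is `b`, this agrees with `U` and is adapted to the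
horizon from day `d + 1`: the control at `ω'` is read off at a point with day-`d` block `b`
sharing the noises of `ω'` from day `d + 1` on. -/
noncomputable def fiberControl (d : ℕ) (U : ∀ d' m', Ω → Uc d' m') (b : NoiseBlock Wn M d) :
    ∀ d' m', Ω → Uc d' m' :=
  fun d' m' ω' => U d' m' (@Classical.epsilon Ω ⟨ω'⟩
    fun ω => dayNoise M Wp d ω = b ∧ NoiseAgree M Wp (d + 1) d' m' ω ω')

theorem horizonAdapted_fiberControl {d : ℕ} (U : ∀ d' m', Ω → Uc d' m')
    (b : NoiseBlock Wn M d) : HorizonAdapted M Wp (d + 1) (fiberControl M Wp d U b) := by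
  intro d' m' ω₁ ω₂ h
  have : (fun ω => dayNoise M Wp d ω = b ∧ NoiseAgree M Wp (d + 1) d' m' ω ω₁) =
      fun ω => dayNoise M Wp d ω = b ∧ NoiseAgree M Wp (d + 1) d' m' ω ω₂ :=
    funext fun ω => propext <| and_congr_right fun _ =>
      ⟨fun h' => h'.trans h, fun h' => h'.trans h.symm⟩
  simp only [fiberControl, this]

theorem fiberControl_eq {d : ℕ} {U : ∀ d' m', Ω → Uc d' m'} (hU : HorizonAdapted M Wp d U)
    {ω : Ω} {b : NoiseBlock Wn M d} (hb : dayNoise M Wp d ω = b) (d' m' : ℕ) :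
    fiberControl M Wp d U b d' m' ω = U d' m' ω := by
  obtain ⟨h₁, h₂⟩ := Classical.epsilon_spec
    (p := fun ω' => dayNoise M Wp d ω' = b ∧ NoiseAgree M Wp (d + 1) d' m' ω' ω)
    ⟨ω, hb, NoiseAgree.refl ω⟩
  exact hU d' m' _ _ (h₂.of_dayNoise_eq (h₁.trans hb.symm))

section Bellman

variable [Fintype Ω] (P : Ω → ℝ≥0∞)

variable (M Wp f) in
noncomputable def optCost (n d : ℕ) (K : X (d + n) → ℝ≥0∞) (x : X d) : ℝ≥0∞ :=
  ⨅ U : {U : ∀ d' m', Ω → Uc d' m' // HorizonAdapted M Wp d U},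
    ∑' ω, K (trajDay M Wp f U.1 n d x ω) * P ω

theorem optCost_zero [∀ d m, Nonempty (Uc d m)] (hP : ∑ ω, P ω = 1) (d : ℕ)
    (K : X (d + 0) → ℝ≥0∞) (x : X d) : optCost M Wp f P 0 d K x = K x := by
  have := nonempty_horizonAdapted (Uc := Uc) M Wp d
  simp [optCost, trajDay, tsum_fintype, ← Finset.mul_sum, hP]

theorem tsum_trajDay_succ (U : ∀ d' m', Ω → Uc d' m') (n d : ℕ) (K : X (d + (n + 1)) → ℝ≥0∞)
    (x : X d) :
    ∑' ω, K (trajDay M Wp f U (n + 1) d x ω) * P ω =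
      ∑ ω, K (xcast (Nat.add_right_comm d 1 n)
        (trajDay M Wp f U n (d + 1) (endOfDay M Wp f x (fun m => U d m) ω) ω)) * P ω := by
  rw [tsum_fintype]
  exact Finset.sum_congr rfl fun ω _ => by
    rw [xcast_eq_of_heq _ (trajDay_succ_heq U n d x ω).symm]

theorem sum_trajDay_endOfDay_eq_sum_sum {D n d : ℕ}
    (hind : IndepOnAtoms P (dayNoise M Wp d) (laterNoise M Wp D d)) (hn : d + n ≤ D)
    {Ud : ∀ m : Fin (M + 1), Ω → Uc d m} (hUd : DayAdapted M Wp d Ud)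
    (V : Ω → ∀ d' m', Ω → Uc d' m') (hV : ∀ ω, HorizonAdapted M Wp (d + 1) (V ω))
    (hVd : ∀ ω ω', dayNoise M Wp d ω = dayNoise M Wp d ω' → V ω = V ω')
    (K : X (d + 1 + n) → ℝ≥0∞) (x : X d) :
    ∑ ω, K (trajDay M Wp f (V ω) n (d + 1) (endOfDay M Wp f x Ud ω) ω) * P ω =
      ∑ ω, (∑ ω', K (trajDay M Wp f (V ω) n (d + 1) (endOfDay M Wp f x Ud ω) ω') * P ω') *
        P ω :=
  sum_diag_eq_sum_sum_of_indepOnAtoms P hind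
    (fun ω ω' => K (trajDay M Wp f (V ω) n (d + 1) (endOfDay M Wp f x Ud ω) ω'))
    (fun ω₁ ω₂ h => by rw [hVd ω₁ ω₂ h, hUd.endOfDay_eq x h])
    fun ω ω₁ ω₂ h => congrArg K <| (hV ω).trajDay_eq n _ fun k h₁ h₂ =>
      congrFun h ⟨k, Finset.mem_Ioc.2 ⟨by omega, by omega⟩⟩

theorem le_optCost_succ {D n d : ℕ}
    (hind : IndepOnAtoms P (dayNoise M Wp d) (laterNoise M Wp D d)) (hn : d + n ≤ D)
    (K : X (d + (n + 1)) → ℝ≥0∞) (x : X d) :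
    ⨅ Ud : {Ud : ∀ m : Fin (M + 1), Ω → Uc d m // DayAdapted M Wp d Ud},
        ∑' ω, optCost M Wp f P n (d + 1) (fun y => K (xcast (Nat.add_right_comm d 1 n) y))
          (endOfDay M Wp f x Ud.1 ω) * P ω ≤
      optCost M Wp f P (n + 1) d K x := by
  refine le_iInf fun U => iInf_le_of_le ⟨fun m => U.1 d m, U.2.dayAdapted⟩ ?_
  set K' := fun y => K (xcast (Nat.add_right_comm d 1 n) y)
  set x₁ := endOfDay M Wp f x (fun m => U.1 d m)
  set V := fun ω => fiberControl M Wp d U.1 (dayNoise M Wp d ω)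
  calc ∑' ω, optCost M Wp f P n (d + 1) K' (x₁ ω) * P ω
      ≤ ∑ ω, (∑ ω', K' (trajDay M Wp f (V ω) n (d + 1) (x₁ ω) ω') * P ω') * P ω := by
        rw [tsum_fintype]
        refine Finset.sum_le_sum fun ω _ => mul_le_mul_left ?_ _
        exact iInf_le_of_le ⟨V ω, horizonAdapted_fiberControl _ _⟩ (tsum_fintype _).le
    _ = ∑ ω, K' (trajDay M Wp f (V ω) n (d + 1) (x₁ ω) ω) * P ω :=
        (sum_trajDay_endOfDay_eq_sum_sum P hind hn U.2.dayAdapted V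
          (fun _ => horizonAdapted_fiberControl _ _) (fun ω ω' h => by simp only [V, h]) K' x).symm
    _ = ∑' ω, K (trajDay M Wp f U.1 (n + 1) d x ω) * P ω := by
        rw [tsum_trajDay_succ]
        refine Finset.sum_congr rfl fun ω _ => ?_
        rw [trajDay_congr (V ω) U.1 n (d + 1) (x₁ ω) ω ω
          (fun k m _ _ => fiberControl_eq U.2 rfl k m) fun _ _ _ => rfl]

theorem optCost_succ_le [∀ d m, Nonempty (Uc d m)] (hP : ∑ ω, P ω = 1) {D n d : ℕ}
    (hind : IndepOnAtoms P (dayNoise M Wp d) (laterNoise M Wp D d)) (hn : d + n ≤ D)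
    (K : X (d + (n + 1)) → ℝ≥0∞) (x : X d) :
    optCost M Wp f P (n + 1) d K x ≤
      ⨅ Ud : {Ud : ∀ m : Fin (M + 1), Ω → Uc d m // DayAdapted M Wp d Ud},
        ∑' ω, optCost M Wp f P n (d + 1) (fun y => K (xcast (Nat.add_right_comm d 1 n) y))
          (endOfDay M Wp f x Ud.1 ω) * P ω := by
  refine le_iInf fun Ud => ENNReal.le_of_forall_pos_le_add fun ε hε _ => ?_
  set K' := fun y => K (xcast (Nat.add_right_comm d 1 n) y)
  set x₁ := endOfDay M Wp f x Ud.1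
  have := nonempty_horizonAdapted (Uc := Uc) M Wp (d + 1)
  choose Φ hΦ using fun y => ENNReal.exists_le_iInf_add
    (fun V : {V // HorizonAdapted M Wp (d + 1) V} =>
      ∑' ω, K' (trajDay M Wp f V.1 n (d + 1) y ω) * P ω)
    (ENNReal.coe_ne_zero.2 hε.ne')
  set V := fun ω => (Φ (x₁ ω)).1
  have hVd : ∀ ω ω', dayNoise M Wp d ω = dayNoise M Wp d ω' → V ω = V ω' :=
    fun ω ω' h => by simp only [V, x₁, Ud.2.endOfDay_eq x h]
  calc optCost M Wp f P (n + 1) d K x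
      ≤ ∑' ω, K (trajDay M Wp f (spliceControl d Ud.1 V) (n + 1) d x ω) * P ω :=
        iInf_le_of_le ⟨_, horizonAdapted_spliceControl Ud.2 (fun ω => (Φ _).2) hVd⟩ le_rfl
    _ = ∑ ω, K' (trajDay M Wp f (V ω) n (d + 1) (x₁ ω) ω) * P ω := by
        rw [tsum_trajDay_succ]
        refine Finset.sum_congr rfl fun ω _ => ?_
        have hday : (fun m : Fin (M + 1) => spliceControl d Ud.1 V d m) = Ud.1 :=
          funext fun m => funext fun ω => spliceControl_self m.2 ω
        rw [hday, trajDay_congr _ (V ω) n (d + 1) (x₁ ω) ω ω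
          (fun k m hk _ => spliceControl_of_lt hk m ω) fun _ _ _ => rfl]
    _ = ∑ ω, (∑ ω', K' (trajDay M Wp f (V ω) n (d + 1) (x₁ ω) ω') * P ω') * P ω :=
        sum_trajDay_endOfDay_eq_sum_sum P hind hn Ud.2 V (fun ω => (Φ _).2) hVd K' x
    _ ≤ ∑ ω, (optCost M Wp f P n (d + 1) K' (x₁ ω) + ε) * P ω :=
        Finset.sum_le_sum fun ω _ =>
          mul_le_mul_left ((tsum_fintype _).symm.le.trans (hΦ (x₁ ω))) _
    _ = ∑' ω, optCost M Wp f P n (d + 1) K' (x₁ ω) * P ω + ε := by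
        simp only [add_mul, Finset.sum_add_distrib, ← Finset.mul_sum, hP, mul_one, tsum_fintype]

theorem optCost_succ [∀ d m, Nonempty (Uc d m)] (hP : ∑ ω, P ω = 1) {D n d : ℕ}
    (hind : IndepOnAtoms P (dayNoise M Wp d) (laterNoise M Wp D d)) (hn : d + n ≤ D)
    (K : X (d + (n + 1)) → ℝ≥0∞) (x : X d) :
    optCost M Wp f P (n + 1) d K x =
      ⨅ Ud : {Ud : ∀ m : Fin (M + 1), Ω → Uc d m // DayAdapted M Wp d Ud},
        ∑' ω, optCost M Wp f P n (d + 1) (fun y => K (xcast (Nat.add_right_comm d 1 n) y))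
          (endOfDay M Wp f x Ud.1 ω) * P ω :=
  le_antisymm (optCost_succ_le P hP hind hn K x) (le_optCost_succ P hind hn K x)

end Bellman

theorem jointLawFactorizes_dayNoise [∀ d m, Nonempty (Wn d m)] [Fintype Ω] {P : Ω → ℝ≥0∞}
    {D : ℕ}
    (hind : ∀ w : ∀ d m, Wn d m,
      (∑' ω : Ω, if (∀ d, d ≤ D →
            ((∀ m, 1 ≤ m → m ≤ M → Wp d m ω = w d m) ∧ Wp (d + 1) 0 ω = w (d + 1) 0))
          then P ω else 0)
        = ∏ d ∈ Finset.range (D + 1),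
            ∑' ω : Ω, if ((∀ m, 1 ≤ m → m ≤ M → Wp d m ω = w d m) ∧
                Wp (d + 1) 0 ω = w (d + 1) 0) then P ω else 0) :
    JointLawFactorizes P (dayNoise M Wp) (Finset.range (D + 1)) := by
  intro γ
  have hblock : ∀ d ω, ((∀ m, 1 ≤ m → m ≤ M → Wp d m ω = noiseOfBlocks M γ d m) ∧
      Wp (d + 1) 0 ω = noiseOfBlocks M γ (d + 1) 0) ↔ dayNoise M Wp d ω = γ d := fun d ω => by
    rw [← dayBlock_noiseOfBlocks M γ d]
    exact (dayBlock_eq_iff M (u := fun d m => Wp d m ω)).symm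
  have h := hind (noiseOfBlocks M γ)
  simp only [tsum_fintype, ← Finset.sum_filter, hblock] at h
  refine (sum_filter_congr_of_iff P fun ω => ?_).trans <| h.trans <|
    Finset.prod_congr rfl fun i _ => sum_filter_congr_of_iff P fun ω => Iff.rfl
  simp

theorem indepOnAtoms_dayNoise [Fintype Ω] {P : Ω → ℝ≥0∞} (hP : ∑ ω, P ω = 1) {D d : ℕ}
    (h : JointLawFactorizes P (dayNoise M Wp) (Finset.range (D + 1))) (hd : d ≤ D) :
    IndepOnAtoms P (dayNoise M Wp d) (laterNoise M Wp D d) :=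
  (h.mono hP fun k hk => by simp at hk ⊢; omega).indepOnAtoms
    (h.mono hP fun k hk => by simp at hk ⊢; omega) (by simp)

theorem vday_eq_optCost [∀ d m, Nonempty (Uc d m)] [Fintype Ω] {P : Ω → ℝ≥0∞}
    (hP : ∑ ω, P ω = 1) {D : ℕ}
    (hjoint : JointLawFactorizes P (dayNoise M Wp) (Finset.range (D + 1))) :
    ∀ (n d : ℕ) (K : X (d + n) → ℝ≥0∞) (x : X d), d + n ≤ D + 1 →
      Vday M P Wp f n d K x = optCost M Wp f P n d K x
  | 0, d, K, x, _ => (optCost_zero P hP d K x).symm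
  | n + 1, d, K, x, hn => by
    rw [optCost_succ P hP (indepOnAtoms_dayNoise hP hjoint (by omega)) (by omega : d + n ≤ D),
      Vday]
    refine iInf_congr fun Ud => tsum_congr fun ω => ?_
    rw [vday_eq_optCost hP hjoint n (d + 1) _ _ (by omega)]
    rfl

end TwoTimeScale

open TwoTimeScale in
theorem two_time_scale_dp_general {X : ℕ → Type} {Uc Wn : ℕ → ℕ → Type}
    [∀ d m, Nonempty (Wn d m)]
    [∀ d m, Nonempty (Uc d m)]
    {Ω : Type} [Fintype Ω]
    (P : Ω → ℝ≥0∞) (hP : ∑' ω : Ω, P ω = 1)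
    (Wp : ∀ d m, Ω → Wn d m) (D M : ℕ)
    (hind : ∀ w : ∀ d m, Wn d m,
      (∑' ω : Ω, if (∀ d, d ≤ D →
            ((∀ m, 1 ≤ m → m ≤ M → Wp d m ω = w d m) ∧ Wp (d + 1) 0 ω = w (d + 1) 0))
          then P ω else 0)
        = ∏ d ∈ Finset.range (D + 1),
            ∑' ω : Ω, if ((∀ m, 1 ≤ m → m ≤ M → Wp d m ω = w d m) ∧
                Wp (d + 1) 0 ω = w (d + 1) 0) then P ω else 0)
    (f : ∀ d, X d → (∀ m : Fin (M + 1), Uc d m) →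
      (∀ m : Fin M, Wn d ((m : ℕ) + 1)) → Wn (d + 1) 0 → X (d + 1))
    (jt : X (D + 1) → ℝ≥0∞)
    (n d : ℕ) (e : d + n = D + 1) (x : X d) :
    Vday M P Wp f n d (fun x' => jt (xcast e x')) x
      = ⨅ Up : {Up : ∀ d' m', Ω → Uc d' m' //
            ∀ (d' m' : ℕ) (ω ω' : Ω),
              (∀ d'' m'',
                  ((d < d'' ∧ m'' = 0) ∨ (d ≤ d'' ∧ 1 ≤ m'' ∧ m'' ≤ M)) →
                  (d'' < d' ∨ (d'' = d' ∧ m'' ≤ m')) →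
                  Wp d'' m'' ω = Wp d'' m'' ω') →
              Up d' m' ω = Up d' m' ω'},
          ∑' ω : Ω, jt (xcast e (trajDay M Wp f Up.1 n d x ω)) * P ω := by
  rw [tsum_fintype] at hP
  exact vday_eq_optCost hP (jointLawFactorizes_dayNoise hind) n d _ x e.le

/-- two time-scales dynamic programming with slow-scale independence (finite
case). If the slow-scale noise blocks `(W_{d,1},…,W_{d,M},W_{d+1,0})` are mutually
independent across days `d = 0,…,D` (their joint pmf factorizes across days), then the slow
scale Bellman recursion `Ṽ_{D+1} = j̃`,
`Ṽ_d(x) = inf over within-day adapted controls of E[Ṽ_{d+1}(f_d(x, U_{d,0}, W_{d,1}, …,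
U_{d,M}, W_{d+1,0}))]` computes the overall optimal value: `Ṽ_d(x_d)` equals the infimum
over all adapted control processes from day `d` on (the control at minute `m'` of day `d'`
may depend on all noises of the horizon from just after `(d,0)` up to `(d',m')` in the
lexicographic order) of `E[ j̃(X_{D+1}) ]`. -/
theorem two_time_scale_dp {X : ℕ → Type} {Uc Wn : ℕ → ℕ → Type}
    [∀ d m, Fintype (Wn d m)] [∀ d m, Nonempty (Wn d m)]
    [∀ d m, Fintype (Uc d m)] [∀ d m, Nonempty (Uc d m)] [∀ d, Fintype (X d)]
    {Ω : Type} [Fintype Ω] [Nonempty Ω]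
    (P : Ω → ℝ≥0∞) (hP : ∑' ω : Ω, P ω = 1)
    (Wp : ∀ d m, Ω → Wn d m) (D M : ℕ)
    (hind : ∀ w : ∀ d m, Wn d m,
      (∑' ω : Ω, if (∀ d, d ≤ D →
            ((∀ m, 1 ≤ m → m ≤ M → Wp d m ω = w d m) ∧ Wp (d + 1) 0 ω = w (d + 1) 0))
          then P ω else 0)
        = ∏ d ∈ Finset.range (D + 1),
            ∑' ω : Ω, if ((∀ m, 1 ≤ m → m ≤ M → Wp d m ω = w d m) ∧
                Wp (d + 1) 0 ω = w (d + 1) 0) then P ω else 0)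
    (f : ∀ d, X d → (∀ m : Fin (M + 1), Uc d m) →
      (∀ m : Fin M, Wn d ((m : ℕ) + 1)) → Wn (d + 1) 0 → X (d + 1))
    (jt : X (D + 1) → ℝ≥0∞)
    (n d : ℕ) (e : d + n = D + 1) (x : X d) :
    Vday M P Wp f n d (fun x' => jt (xcast e x')) x
      = ⨅ Up : {Up : ∀ d' m', Ω → Uc d' m' //
            ∀ (d' m' : ℕ) (ω ω' : Ω),
              (∀ d'' m'',
                  ((d < d'' ∧ m'' = 0) ∨ (d ≤ d'' ∧ 1 ≤ m'' ∧ m'' ≤ M)) →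
                  (d'' < d' ∨ (d'' = d' ∧ m'' ≤ m')) →
                  Wp d'' m'' ω = Wp d'' m'' ω') →
              Up d' m' ω = Up d' m' ω'},
          ∑' ω : Ω, jt (xcast e (trajDay M Wp f Up.1 n d x ω)) * P ω :=
  two_time_scale_dp_general P hP Wp D M hind f jt n d e x
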